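/- arXiv:1002.0007 — 2 statements merged into one kernel-verified Lean document; each statement's English description precedes it below -/
import Mathlib

section
/- Let (X,d) be a metric space and let ν be a Borel measure on X whose support is all of X and which is finite on bounded sets, satisfying the Bishop–Gromov inequality with parameters (K,N), where K ≤ 0 and 1 < N < ∞. Then for every R > 0 there exists c = c(K,N,R) > 0 such that for every z ∈ X, every x ∈ X and every r with 0 < r ≤ R, if B(x,r) ⊆ B(z,R) then ν(B(x,r)) ≥ c·ν(B(z,R))·r^N. -/
open MeasureTheory Metric

/-- The model volume density `S_K^N` for `K ≤ 0`, `1 < N < ∞`. -/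
noncomputable def SKN (K N t : ℝ) : ℝ :=
  if K = 0 then t ^ (N - 1)
  else Real.sinh (Real.sqrt (|K| / (N - 1)) * t) ^ (N - 1)

/-- A Borel measure `ν` of full support satisfies the Bishop–Gromov inequality with
parameters `(K, N)` if for every `x` the function
`r ↦ ν(B(x,r)) / ∫₀^r S_K^N(t) dt` is nonincreasing on `(0, ∞)`. -/
def BishopGromov {X : Type*} [MetricSpace X] [MeasurableSpace X]
    (ν : Measure X) (K N : ℝ) : Prop :=
  ∀ x : X, AntitoneOn
    (fun r => (ν (ball x r)).toReal / ∫ t in (0:ℝ)..r, SKN K N t) (Set.Ioi 0)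

/-!
Bishop–Gromov monotonicity between the radii `r` and `2R` gives
`ν(B(x,r)) ≥ ν(B(x,2R)) · ∫₀^r S_K^N / ∫₀^{2R} S_K^N`. Since `sinh s ≥ s`, the density satisfies
`S_K^N(t) ≥ a^{N-1} t^{N-1}` with `a = √(|K|/(N-1))` (and `a^{N-1}` replaced by `1` when
`K = 0`), so `∫₀^r S_K^N ≥ a^{N-1} r^N / N`. Finally `B(x,r) ⊆ B(z,R)` puts `x` in `B(z,R)`,
whence `B(z,R) ⊆ B(x,2R)`, and `c = a^{N-1} / (N ∫₀^{2R} S_K^N)` works.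
-/

noncomputable def SKNCoeff (K N : ℝ) : ℝ :=
  if K = 0 then 1 else Real.sqrt (|K| / (N - 1)) ^ (N - 1)

section SKN

variable {K N : ℝ}

lemma SKNCoeff_pos (hN : 1 < N) : 0 < SKNCoeff K N := by
  unfold SKNCoeff
  split_ifs with hK
  · exact one_pos
  · exact Real.rpow_pos_of_pos
      (Real.sqrt_pos.2 (div_pos (abs_pos.2 hK) (sub_pos.2 hN))) _

lemma SKNCoeff_mul_rpow_le_SKN (hN : 1 ≤ N) {t : ℝ} (ht : 0 ≤ t) :
    SKNCoeff K N * t ^ (N - 1) ≤ SKN K N t := by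
  unfold SKNCoeff SKN
  split_ifs with hK
  · rw [one_mul]
  · set a := Real.sqrt (|K| / (N - 1))
    have hat : 0 ≤ a * t := mul_nonneg (Real.sqrt_nonneg _) ht
    rw [← Real.mul_rpow (Real.sqrt_nonneg _) ht]
    exact Real.rpow_le_rpow hat (Real.self_le_sinh_iff.2 hat) (sub_nonneg.2 hN)

lemma continuous_SKN (hN : 1 ≤ N) : Continuous (SKN K N) := by
  unfold SKN
  split_ifs
  · exact continuous_id.rpow_const fun _ => Or.inr (sub_nonneg.2 hN)
  · exact (Real.continuous_sinh.comp (continuous_const_mul _)).rpow_const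
      fun _ => Or.inr (sub_nonneg.2 hN)

lemma SKNCoeff_mul_rpow_div_le_integral_SKN (hN : 1 ≤ N) {r : ℝ} (hr : 0 ≤ r) :
    SKNCoeff K N * r ^ N / N ≤ ∫ t in (0:ℝ)..r, SKN K N t := by
  have hN0 : N ≠ 0 := by linarith
  have hmodel : ∫ t in (0:ℝ)..r, SKNCoeff K N * t ^ (N - 1) = SKNCoeff K N * r ^ N / N := by
    rw [intervalIntegral.integral_const_mul, integral_rpow (Or.inl (by linarith)),
      sub_add_cancel, Real.zero_rpow hN0, sub_zero, mul_div_assoc]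
  rw [← hmodel]
  refine intervalIntegral.integral_mono_on hr ?_ ((continuous_SKN hN).intervalIntegrable _ _)
    fun t ht => SKNCoeff_mul_rpow_le_SKN hN ht.1
  exact ((continuous_id.rpow_const fun _ => Or.inr (sub_nonneg.2 hN)).intervalIntegrable _ _).const_mul _

lemma integral_SKN_pos (hN : 1 < N) {r : ℝ} (hr : 0 < r) : 0 < ∫ t in (0:ℝ)..r, SKN K N t :=
  (div_pos (mul_pos (SKNCoeff_pos hN) (Real.rpow_pos_of_pos hr N)) (by linarith)).trans_le
    (SKNCoeff_mul_rpow_div_le_integral_SKN hN.le hr.le)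

end SKN

lemma BishopGromov.toReal_measure_ball_mul_integral_le {X : Type*} [MetricSpace X]
    [MeasurableSpace X] {ν : Measure X} {K N : ℝ} (hBG : BishopGromov ν K N) (hN : 1 < N)
    (x : X) {r s : ℝ} (hr : 0 < r) (hrs : r ≤ s) :
    (ν (ball x s)).toReal * ∫ t in (0:ℝ)..r, SKN K N t
      ≤ (ν (ball x r)).toReal * ∫ t in (0:ℝ)..s, SKN K N t := by
  have hmono := hBG x (Set.mem_Ioi.2 hr) (Set.mem_Ioi.2 (hr.trans_le hrs)) hrs
  rwa [div_le_div_iff₀ (integral_SKN_pos hN (hr.trans_le hrs)) (integral_SKN_pos hN hr)] at hmono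

theorem stmt_3_general {X : Type*} [MetricSpace X] [MeasurableSpace X]
    (ν : Measure X)
    (hbdd : ∀ s : Set X, Bornology.IsBounded s → ν s < ⊤)
    (K N : ℝ) (hN : 1 < N)
    (hBG : BishopGromov ν K N) :
    ∀ R > (0:ℝ), ∃ c > (0:ℝ), ∀ z x : X, ∀ r : ℝ, 0 < r → r ≤ R →
      ball x r ⊆ ball z R →
      c * (ν (ball z R)).toReal * r ^ N ≤ (ν (ball x r)).toReal := by
  intro R hR
  set I₂ := ∫ t in (0:ℝ)..(2 * R), SKN K N t
  have hI₂ : 0 < I₂ := integral_SKN_pos hN (by linarith)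
  have hc : 0 < SKNCoeff K N / N / I₂ := div_pos (div_pos (SKNCoeff_pos hN) (by linarith)) hI₂
  refine ⟨SKNCoeff K N / N / I₂, hc, fun z x r hr hrR hsub => ?_⟩
  have hxz : dist x z < R := hsub (mem_ball_self hr)
  have hball : ball z R ⊆ ball x (2 * R) :=
    ball_subset_ball' (by rw [dist_comm]; linarith)
  calc SKNCoeff K N / N / I₂ * (ν (ball z R)).toReal * r ^ N
      ≤ SKNCoeff K N / N / I₂ * (ν (ball x (2 * R))).toReal * r ^ N := by
        gcongr
        exact (hbdd _ isBounded_ball).ne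
    _ = (ν (ball x (2 * R))).toReal * (SKNCoeff K N * r ^ N / N) / I₂ := by ring
    _ ≤ (ν (ball x (2 * R))).toReal * (∫ t in (0:ℝ)..r, SKN K N t) / I₂ := by
        gcongr
        exact SKNCoeff_mul_rpow_div_le_integral_SKN hN.le hr.le
    _ ≤ (ν (ball x r)).toReal := by
        rw [div_le_iff₀ hI₂]
        exact hBG.toReal_measure_ball_mul_integral_le hN x hr (by linarith)

theorem stmt_3 {X : Type*} [MetricSpace X] [MeasurableSpace X] [BorelSpace X]
    (ν : Measure X)
    (hfull : ∀ x : X, ∀ r > (0:ℝ), 0 < ν (ball x r))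
    (hbdd : ∀ s : Set X, Bornology.IsBounded s → ν s < ⊤)
    (K N : ℝ) (hK : K ≤ 0) (hN : 1 < N)
    (hBG : BishopGromov ν K N) :
    ∀ R > (0:ℝ), ∃ c > (0:ℝ), ∀ z x : X, ∀ r : ℝ, 0 < r → r ≤ R →
      ball x r ⊆ ball z R →
      c * (ν (ball z R)).toReal * r ^ N ≤ (ν (ball x r)).toReal :=
  stmt_3_general ν hbdd K N hN hBG
end

section
/- Let (X,d) be a proper geodesic metric space and let ν be a Borel measure on X whose support is all of X and which is finite on bounded sets, satisfying the Bishop–Gromov inequality with parameters (K,N), where K ≤ 0 and 1 < N < ∞. Let ε > 0, let 𝒩 be a maximal ε-separated net in X, and let G(𝒩) be the associated discretization graph with combinatorial metric 𝐝. Then G(𝒩) is connected and the inclusion map (𝒩,𝐝) → (X,d) is a rough isometry; more precisely: (i) d(p,q) ≤ 2ε·𝐝(p,q) for all p,q ∈ 𝒩; (ii) there exist constants C₀, C₁ > 0 depending only on K, N and ε such that 𝐝(p,q) ≤ (C₀/ε)·d(p,q) + C₁ for all p,q ∈ 𝒩; and (iii) every point of X is within distance ε of 𝒩. -/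
open MeasureTheory Metric

/-- A metric space is geodesic if every pair of points is joined by a geodesic
(an isometric image of a real interval). -/
def IsGeodesicSpace (X : Type*) [MetricSpace X] : Prop :=
  ∀ x y : X, ∃ f : ℝ → X, f 0 = x ∧ f (dist x y) = y ∧
    ∀ s ∈ Set.Icc (0:ℝ) (dist x y), ∀ t ∈ Set.Icc (0:ℝ) (dist x y),
      dist (f s) (f t) = |s - t|

/-- A subset `𝒩` of a metric space is `ε`-separated if distinct points of `𝒩` are at
distance at least `ε`. -/
def IsSeparated {X : Type*} [MetricSpace X] (𝒩 : Set X) (ε : ℝ) : Prop :=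
  ∀ p ∈ 𝒩, ∀ q ∈ 𝒩, p ≠ q → ε ≤ dist p q

/-- A maximal `ε`-separated net: an `ε`-separated set maximal with respect to inclusion. -/
def IsMaximalNet {X : Type*} [MetricSpace X] (𝒩 : Set X) (ε : ℝ) : Prop :=
  IsSeparated 𝒩 ε ∧ ∀ M : Set X, 𝒩 ⊆ M → IsSeparated M ε → M = 𝒩

/-- The discretization graph `G(𝒩)`: vertices are points of `𝒩`, and distinct `p, q`
are adjacent iff `B(p,ε) ∩ B(q,ε) ≠ ∅`, equivalently `dist p q < 2ε`. -/
def netGraph {X : Type*} [MetricSpace X] (𝒩 : Set X) (ε : ℝ) : SimpleGraph 𝒩 where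
  Adj p q := p ≠ q ∧ dist (p : X) (q : X) < 2 * ε
  symm := by
    constructor
    intro p q h
    exact ⟨h.1.symm, by rw [dist_comm]; exact h.2⟩
  loopless := by
    constructor
    intro p h
    exact h.1 rfl

/-!
Maximality makes the net `ε`-dense. For `y ∈ B(x, R)`, Bishop–Gromov compares `ν(B(y, ε/2))`
with `ν(B(y, 2R + ε/2)) ≥ ν(B(x, R + ε/2))`, so the disjoint balls `B(y, ε/2)` around the net
points in `B(x, R)` bound their number by `V(2R + ε/2) / V(ε/2)`, where `V` is the model volume.
Walking along a geodesic from `a` to `b`, a net point within `ε` of the point at distance `ε`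
from `a` is adjacent to `a` and strictly closer to `b`; by local finiteness this terminates, so
`G(𝒩)` is connected and points less than `3ε` apart are at graph distance at most
`C = V(13ε/2) / V(ε/2)`. Cutting a geodesic into pieces of length `2ε` gives the linear upper
bound; the lower bound is the triangle inequality along a shortest path.
-/

lemma SKN_continuous (K : ℝ) {N : ℝ} (hN : 1 < N) : Continuous (SKN K N) := by
  have hN' : 0 ≤ N - 1 := by linarith
  unfold SKN
  split_ifs
  · exact Real.continuous_rpow_const hN'
  · exact (Real.continuous_sinh.comp (continuous_const.mul continuous_id)).rpow_const
      fun _ => Or.inr hN'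

lemma SKN_pos (K : ℝ) {N t : ℝ} (hN : 1 < N) (ht : 0 < t) : 0 < SKN K N t := by
  unfold SKN
  split_ifs with hK
  · exact Real.rpow_pos_of_pos ht _
  · refine Real.rpow_pos_of_pos (Real.sinh_pos_iff.mpr (mul_pos ?_ ht)) _
    exact Real.sqrt_pos.mpr (div_pos (abs_pos.mpr hK) (by linarith))

noncomputable def modelVolume (K N r : ℝ) : ℝ :=
  ∫ t in (0:ℝ)..r, SKN K N t

lemma modelVolume_pos (K : ℝ) {N r : ℝ} (hN : 1 < N) (hr : 0 < r) : 0 < modelVolume K N r :=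
  intervalIntegral.intervalIntegral_pos_of_pos_on ((SKN_continuous K hN).intervalIntegrable _ _)
    (fun _ ht => SKN_pos K hN ht.1) hr

section Packing

variable {X : Type*} [MetricSpace X] [MeasurableSpace X] {ν : Measure X} {K N ε : ℝ}
  {𝒩 : Set X}

lemma BishopGromov.toReal_measure_ball_mul_le (hBG : BishopGromov ν K N) (hN : 1 < N) (y : X)
    {r₁ r₂ : ℝ} (h₁ : 0 < r₁) (h₁₂ : r₁ ≤ r₂) :
    (ν (ball y r₂)).toReal * modelVolume K N r₁ ≤
      (ν (ball y r₁)).toReal * modelVolume K N r₂ := by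
  have h₂ : 0 < r₂ := h₁.trans_le h₁₂
  have : (ν (ball y r₂)).toReal / modelVolume K N r₂ ≤
      (ν (ball y r₁)).toReal / modelVolume K N r₁ := hBG y h₁ h₂ h₁₂
  rwa [div_le_div_iff₀ (modelVolume_pos K hN h₂) (modelVolume_pos K hN h₁)] at this

lemma IsSeparated.sum_measure_ball_le [OpensMeasurableSpace X] (hsep : IsSeparated 𝒩 ε)
    {x : X} {R : ℝ} {F : Finset X} (hF : ↑F ⊆ 𝒩 ∩ closedBall x R) :
    ∑ y ∈ F, ν (ball y (ε / 2)) ≤ ν (ball x (R + ε / 2)) := by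
  have hdisj : (F : Set X).PairwiseDisjoint fun y => ball y (ε / 2) := fun y hy y' hy' hne =>
    ball_disjoint_ball (by linarith [hsep y (hF hy).1 y' (hF hy').1 hne])
  rw [← measure_biUnion_finset hdisj fun y _ => measurableSet_ball]
  refine measure_mono (Set.iUnion₂_subset fun y hy => ball_subset_ball' ?_)
  linarith [mem_closedBall.mp (hF hy).2]

lemma IsSeparated.card_le_of_bishopGromov [OpensMeasurableSpace X] (hsep : IsSeparated 𝒩 ε)
    (hε : 0 < ε) (hfull : ∀ x : X, ∀ r > (0:ℝ), 0 < ν (ball x r))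
    (hbdd : ∀ s : Set X, Bornology.IsBounded s → ν s < ⊤) (hN : 1 < N)
    (hBG : BishopGromov ν K N) {x : X} {R : ℝ} (hR : 0 ≤ R) {F : Finset X}
    (hF : ↑F ⊆ 𝒩 ∩ closedBall x R) :
    (F.card : ℝ) ≤ modelVolume K N (2 * R + ε / 2) / modelVolume K N (ε / 2) := by
  have hfin : ∀ y r, ν (ball y r) ≠ ⊤ := fun y r => (hbdd _ isBounded_ball).ne
  set V := (ν (ball x (R + ε / 2))).toReal
  have hV : 0 < V := ENNReal.toReal_pos (hfull x _ (by positivity)).ne' (hfin _ _)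
  have hsmall := modelVolume_pos K hN (half_pos hε)
  have hlarge := modelVolume_pos K hN (r := 2 * R + ε / 2) (by positivity)
  have hlow : ∀ y ∈ F, V * modelVolume K N (ε / 2) ≤
      (ν (ball y (ε / 2))).toReal * modelVolume K N (2 * R + ε / 2) := by
    intro y hy
    have hsub : ball x (R + ε / 2) ⊆ ball y (2 * R + ε / 2) :=
      ball_subset_ball' (by linarith [mem_closedBall'.mp (hF hy).2])
    calc V * modelVolume K N (ε / 2)
        ≤ (ν (ball y (2 * R + ε / 2))).toReal * modelVolume K N (ε / 2) :=
          mul_le_mul_of_nonneg_right (ENNReal.toReal_mono (hfin _ _) (measure_mono hsub))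
            hsmall.le
      _ ≤ _ := hBG.toReal_measure_ball_mul_le hN y (half_pos hε) (by linarith)
  have hsum : ∑ y ∈ F, (ν (ball y (ε / 2))).toReal ≤ V := by
    rw [← ENNReal.toReal_sum fun y _ => hfin y _]
    exact ENNReal.toReal_mono (hfin _ _) (hsep.sum_measure_ball_le hF)
  rw [le_div_iff₀ hsmall]
  refine le_of_mul_le_mul_left ?_ hV
  calc V * (F.card * modelVolume K N (ε / 2)) = F.card • (V * modelVolume K N (ε / 2)) := by
        rw [nsmul_eq_mul]; ring
    _ ≤ ∑ y ∈ F, (ν (ball y (ε / 2))).toReal * modelVolume K N (2 * R + ε / 2) :=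
        Finset.card_nsmul_le_sum F _ _ hlow
    _ = (∑ y ∈ F, (ν (ball y (ε / 2))).toReal) * modelVolume K N (2 * R + ε / 2) :=
        (Finset.sum_mul ..).symm
    _ ≤ V * modelVolume K N (2 * R + ε / 2) := mul_le_mul_of_nonneg_right hsum hlarge.le

lemma IsSeparated.finite_inter_closedBall [OpensMeasurableSpace X] (hsep : IsSeparated 𝒩 ε)
    (hε : 0 < ε) (hfull : ∀ x : X, ∀ r > (0:ℝ), 0 < ν (ball x r))
    (hbdd : ∀ s : Set X, Bornology.IsBounded s → ν s < ⊤) (hN : 1 < N)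
    (hBG : BishopGromov ν K N) (x : X) (R : ℝ) : (𝒩 ∩ closedBall x R).Finite := by
  refine Set.Finite.subset ?_
    (Set.inter_subset_inter_right 𝒩 (closedBall_subset_closedBall (le_max_left R 0)))
  by_contra hinf
  set B := modelVolume K N (2 * max R 0 + ε / 2) / modelVolume K N (ε / 2)
  obtain ⟨F, hF, hcard⟩ := Set.Infinite.exists_subset_card_eq hinf (⌈B⌉₊ + 1)
  have := hsep.card_le_of_bishopGromov hε hfull hbdd hN hBG (le_max_right R 0) hF
  rw [hcard, Nat.cast_add_one] at this
  linarith [Nat.le_ceil B]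

lemma IsSeparated.ncard_inter_closedBall_le [OpensMeasurableSpace X] (hsep : IsSeparated 𝒩 ε)
    (hε : 0 < ε) (hfull : ∀ x : X, ∀ r > (0:ℝ), 0 < ν (ball x r))
    (hbdd : ∀ s : Set X, Bornology.IsBounded s → ν s < ⊤) (hN : 1 < N)
    (hBG : BishopGromov ν K N) {x : X} {R : ℝ} (hR : 0 ≤ R) :
    ((𝒩 ∩ closedBall x R).ncard : ℝ) ≤
      modelVolume K N (2 * R + ε / 2) / modelVolume K N (ε / 2) := by
  have hfin := hsep.finite_inter_closedBall hε hfull hbdd hN hBG x R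
  rw [Set.ncard_eq_toFinset_card _ hfin]
  exact hsep.card_le_of_bishopGromov hε hfull hbdd hN hBG hR hfin.coe_toFinset.le

end Packing

lemma IsGeodesicSpace.exists_dist_eq {X : Type*} [MetricSpace X] (hgeo : IsGeodesicSpace X)
    (x y : X) {t : ℝ} (ht₀ : 0 ≤ t) (ht : t ≤ dist x y) :
    ∃ w, dist x w = t ∧ dist w y = dist x y - t := by
  obtain ⟨f, hf₀, hf₁, hf⟩ := hgeo x y
  have hxw := hf 0 ⟨le_rfl, dist_nonneg⟩ t ⟨ht₀, ht⟩
  have hwy := hf t ⟨ht₀, ht⟩ (dist x y) ⟨dist_nonneg, le_rfl⟩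
  rw [hf₀] at hxw
  rw [hf₁] at hwy
  refine ⟨f t, ?_, ?_⟩
  · rw [hxw, zero_sub, abs_neg, abs_of_nonneg ht₀]
  · rw [hwy, abs_of_nonpos (by linarith)]
    ring

section Net

variable {X : Type*} [MetricSpace X] {𝒩 : Set X} {ε : ℝ}

lemma IsMaximalNet.exists_dist_lt (hnet : IsMaximalNet 𝒩 ε) (hε : 0 < ε) (x : X) :
    ∃ p ∈ 𝒩, dist x p < ε := by
  by_contra! hfar
  have hx : x ∉ 𝒩 := fun hx => (hfar x hx).not_gt (by simpa using hε)
  have hsep : IsSeparated (insert x 𝒩) ε := by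
    rintro p (rfl | hp) q (rfl | hq) hpq
    · exact absurd rfl hpq
    · exact hfar q hq
    · rw [dist_comm]
      exact hfar p hp
    · exact hnet.1 p hp q hq hpq
  exact hx (hnet.2 _ (Set.subset_insert x 𝒩) hsep ▸ Set.mem_insert x 𝒩)

lemma IsMaximalNet.exists_near_geodesic (hnet : IsMaximalNet 𝒩 ε) (hgeo : IsGeodesicSpace X)
    (hε : 0 < ε) (x y : X) {t : ℝ} (ht₀ : 0 ≤ t) (ht : t ≤ dist x y) :
    ∃ z ∈ 𝒩, dist x z < t + ε ∧ dist z y < dist x y - t + ε := by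
  obtain ⟨w, hxw, hwy⟩ := hgeo.exists_dist_eq x y ht₀ ht
  obtain ⟨z, hz, hwz⟩ := hnet.exists_dist_lt hε w
  exact ⟨z, hz, by linarith [dist_triangle x w z],
    by linarith [dist_triangle z w y, dist_comm w z]⟩

namespace netGraph

lemma dist_le_two_mul_length {p q : 𝒩} (w : (netGraph 𝒩 ε).Walk p q) :
    dist (p : X) q ≤ 2 * ε * w.length := by
  induction w with
  | nil => simp
  | @cons u v w h _ ih =>
    rw [SimpleGraph.Walk.length_cons, Nat.cast_succ]
    linarith [dist_triangle (u : X) v w, h.2]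

lemma dist_le_two_mul_dist (hconn : (netGraph 𝒩 ε).Connected) (p q : 𝒩) :
    dist (p : X) q ≤ 2 * ε * (netGraph 𝒩 ε).dist p q := by
  obtain ⟨w, hw⟩ := (hconn p q).exists_walk_length_eq_dist
  exact hw ▸ dist_le_two_mul_length w

lemma exists_walk_length_le_ncard (hgeo : IsGeodesicSpace X) (hnet : IsMaximalNet 𝒩 ε)
    (hε : 0 < ε) (hfin : ∀ x : X, ∀ R : ℝ, (𝒩 ∩ closedBall x R).Finite) (a b : 𝒩) :
    ∃ w : (netGraph 𝒩 ε).Walk a b,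
      w.length ≤ (𝒩 ∩ closedBall (b : X) (dist (a : X) b)).ncard := by
  induction hn : (𝒩 ∩ closedBall (b : X) (dist (a : X) b)).ncard using Nat.strong_induction_on
    generalizing a with
  | _ n ih =>
  by_cases hab : a = b
  · subst hab
    exact ⟨.nil, Nat.zero_le _⟩
  have hd : ε ≤ dist (a : X) b := hnet.1 a a.2 b b.2 (Subtype.coe_injective.ne hab)
  obtain ⟨z, hz, haz, hzb⟩ := hnet.exists_near_geodesic hgeo hε a b hε.le hd
  have hcloser : dist z b < dist (a : X) b := by linarith
  have hsub :
      𝒩 ∩ closedBall (b : X) (dist z b) ⊂ 𝒩 ∩ closedBall (b : X) (dist (a : X) b) := by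
    refine (Set.ssubset_iff_of_subset (Set.inter_subset_inter_right 𝒩
      (closedBall_subset_closedBall hcloser.le))).2
      ⟨a, ⟨a.2, mem_closedBall.mpr le_rfl⟩, fun ha => ?_⟩
    linarith [mem_closedBall.mp ha.2]
  have hlt := hn ▸ Set.ncard_lt_ncard hsub (hfin _ _)
  obtain ⟨w, hw⟩ := ih _ hlt ⟨z, hz⟩ rfl
  have hadj : (netGraph 𝒩 ε).Adj a ⟨z, hz⟩ :=
    ⟨fun h => hcloser.ne (by rw [h]), by linarith⟩
  exact ⟨.cons hadj w, by rw [SimpleGraph.Walk.length_cons]; omega⟩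

lemma connected (hgeo : IsGeodesicSpace X) (hnet : IsMaximalNet 𝒩 ε) (hε : 0 < ε)
    (hfin : ∀ x : X, ∀ R : ℝ, (𝒩 ∩ closedBall x R).Finite) (h𝒩 : 𝒩.Nonempty) :
    (netGraph 𝒩 ε).Connected :=
  have := h𝒩.to_subtype
  ⟨fun a b => (exists_walk_length_le_ncard hgeo hnet hε hfin a b).elim fun w _ => ⟨w⟩⟩

lemma dist_le_ncard (hgeo : IsGeodesicSpace X) (hnet : IsMaximalNet 𝒩 ε) (hε : 0 < ε)
    (hfin : ∀ x : X, ∀ R : ℝ, (𝒩 ∩ closedBall x R).Finite) (a b : 𝒩) :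
    (netGraph 𝒩 ε).dist a b ≤ (𝒩 ∩ closedBall (b : X) (dist (a : X) b)).ncard :=
  let ⟨w, hw⟩ := exists_walk_length_le_ncard hgeo hnet hε hfin a b
  (SimpleGraph.dist_le w).trans hw

lemma dist_le_of_forall_dist_lt (hgeo : IsGeodesicSpace X) (hnet : IsMaximalNet 𝒩 ε)
    (hε : 0 < ε) (hconn : (netGraph 𝒩 ε).Connected) {C : ℝ} (hC : 0 ≤ C)
    (hloc : ∀ a b : 𝒩, dist (a : X) b < 3 * ε → ((netGraph 𝒩 ε).dist a b : ℝ) ≤ C)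
    (p q : 𝒩) : ((netGraph 𝒩 ε).dist p q : ℝ) ≤ C / ε * dist (p : X) q + C := by
  have key : ∀ n : ℕ, ∀ a : 𝒩, dist (a : X) q < (n + 2) * ε →
      ((netGraph 𝒩 ε).dist a q : ℝ) ≤ (n + 1) * C := by
    intro n
    induction n with
    | zero =>
      intro a ha
      simpa using hloc a q (by push_cast at ha; linarith)
    | succ n ih =>
      intro a ha
      push_cast at ha ⊢
      by_cases hnear : dist (a : X) q < (n + 2) * ε
      · linarith [ih a hnear]
      have h2ε : 2 * ε ≤ dist (a : X) q := by nlinarith [n.cast_nonneg (α := ℝ)]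
      obtain ⟨z, hz, haz, hzq⟩ := hnet.exists_near_geodesic hgeo hε a q (by positivity) h2ε
      calc ((netGraph 𝒩 ε).dist a q : ℝ)
          ≤ (netGraph 𝒩 ε).dist a ⟨z, hz⟩ + (netGraph 𝒩 ε).dist ⟨z, hz⟩ q := by
            exact_mod_cast hconn.dist_triangle
        _ ≤ C + (n + 1) * C := add_le_add (hloc _ _ (by linarith)) (ih _ (by linarith))
        _ = (n + 1 + 1) * C := by ring
  set n := ⌊dist (p : X) q / ε⌋₊
  have hn : dist (p : X) q < (n + 2) * ε := by
    have := Nat.lt_floor_add_one (dist (p : X) q / ε)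
    rw [div_lt_iff₀ hε] at this
    linarith
  calc ((netGraph 𝒩 ε).dist p q : ℝ) ≤ (n + 1) * C := key n p hn
    _ ≤ (dist (p : X) q / ε + 1) * C := by
        gcongr
        exact Nat.floor_le (by positivity)
    _ = C / ε * dist (p : X) q + C := by ring

end netGraph

end Net

theorem stmt_9_general {X : Type*} [MetricSpace X]
    [MeasurableSpace X] [BorelSpace X]
    (hgeo : IsGeodesicSpace X)
    (ν : Measure X)
    (hfull : ∀ x : X, ∀ r > (0:ℝ), 0 < ν (ball x r))
    (hbdd : ∀ s : Set X, Bornology.IsBounded s → ν s < ⊤)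
    (K N : ℝ) (hN : 1 < N)
    (hBG : BishopGromov ν K N)
    (ε : ℝ) (hε : 0 < ε) (𝒩 : Set X) (hnet : IsMaximalNet 𝒩 ε) (h𝒩 : 𝒩.Nonempty) :
    (netGraph 𝒩 ε).Connected ∧
    (∀ p q : 𝒩, dist (p : X) (q : X) ≤ 2 * ε * ((netGraph 𝒩 ε).dist p q : ℝ)) ∧
    (∃ C₀ > (0:ℝ), ∃ C₁ > (0:ℝ), ∀ p q : 𝒩,
      ((netGraph 𝒩 ε).dist p q : ℝ) ≤ (C₀ / ε) * dist (p : X) (q : X) + C₁) ∧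
    (∀ x : X, ∃ p ∈ 𝒩, dist x p ≤ ε) := by
  have hfin := hnet.1.finite_inter_closedBall hε hfull hbdd hN hBG
  have hconn := netGraph.connected hgeo hnet hε hfin h𝒩
  set C := modelVolume K N (2 * (3 * ε) + ε / 2) / modelVolume K N (ε / 2)
  have hC : 0 < C :=
    div_pos (modelVolume_pos K hN (by positivity)) (modelVolume_pos K hN (by positivity))
  have hloc : ∀ a b : 𝒩, dist (a : X) b < 3 * ε → ((netGraph 𝒩 ε).dist a b : ℝ) ≤ C := by
    intro a b hab
    have hball :
        𝒩 ∩ closedBall (b : X) (dist (a : X) b) ⊆ 𝒩 ∩ closedBall (b : X) (3 * ε) :=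
      Set.inter_subset_inter_right _ (closedBall_subset_closedBall hab.le)
    calc ((netGraph 𝒩 ε).dist a b : ℝ) ≤ (𝒩 ∩ closedBall (b : X) (3 * ε)).ncard := by
          exact_mod_cast (netGraph.dist_le_ncard hgeo hnet hε hfin a b).trans
            (Set.ncard_le_ncard hball (hfin _ _))
      _ ≤ C := hnet.1.ncard_inter_closedBall_le hε hfull hbdd hN hBG (by positivity)
  refine ⟨hconn, netGraph.dist_le_two_mul_dist hconn,
    ⟨C, hC, C, hC, netGraph.dist_le_of_forall_dist_lt hgeo hnet hε hconn hC.le hloc⟩,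
    fun x => ?_⟩
  obtain ⟨p, hp, hxp⟩ := hnet.exists_dist_lt hε x
  exact ⟨p, hp, hxp.le⟩

theorem stmt_9 {X : Type*} [MetricSpace X] [ProperSpace X]
    [MeasurableSpace X] [BorelSpace X]
    (hgeo : IsGeodesicSpace X)
    (ν : Measure X)
    (hfull : ∀ x : X, ∀ r > (0:ℝ), 0 < ν (ball x r))
    (hbdd : ∀ s : Set X, Bornology.IsBounded s → ν s < ⊤)
    (K N : ℝ) (hK : K ≤ 0) (hN : 1 < N)
    (hBG : BishopGromov ν K N)
    (ε : ℝ) (hε : 0 < ε) (𝒩 : Set X) (hnet : IsMaximalNet 𝒩 ε) (h𝒩 : 𝒩.Nonempty) :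
    (netGraph 𝒩 ε).Connected ∧
    (∀ p q : 𝒩, dist (p : X) (q : X) ≤ 2 * ε * ((netGraph 𝒩 ε).dist p q : ℝ)) ∧
    (∃ C₀ > (0:ℝ), ∃ C₁ > (0:ℝ), ∀ p q : 𝒩,
      ((netGraph 𝒩 ε).dist p q : ℝ) ≤ (C₀ / ε) * dist (p : X) (q : X) + C₁) ∧
    (∀ x : X, ∃ p ∈ 𝒩, dist x p ≤ ε) :=
  stmt_9_general hgeo ν hfull hbdd K N hN hBG ε hε 𝒩 hnet h𝒩
end
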